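/- Let u ∈ 𝒳 and let φ(·,t) = K * u(·,t) where K(x) = -(2π)^{-1} log|x| is the fundamental solution of -Δ on ℝ². Then there exists an absolute constant C such that for all t>0 and x∈ℝ², ‖∇φ(·,t)‖_{L^∞} ≤ C ‖u‖_𝒳 t^{-1/2}. -/

import Mathlib

/-
Since `|u(y,t)| ≤ M / (t + |y|²)` and `|∇K(z)| = 1 / (2π|z|)`, it suffices to bound
`∫ dy / ((t + |y|²) |x - y|)`. Replacing `|x - y|` by the smaller of `|y|`, `|x - y|` gives
`1 / ((t + |y|²) |x - y|) ≤ g(y) + g(x - y)` with `g(z) = 1 / ((t + |z|²) |z|)`, so by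
translation invariance the integral is at most `2 ∫ g`. In polar coordinates
`∫ g = 2π ∫₀^∞ dr / (t + r²)`, and `∫_ℝ dr / (t + r²) = π / √t`.
-/

open Real MeasureTheory

/-- The kernel `c₀ x / |x|²` with `c₀ = -(2π)⁻¹`, i.e. the gradient of the fundamental
solution `-(2π)⁻¹ log|x|` of `-Δ` on `ℝ²`. -/
noncomputable def rieszKernel (x : EuclideanSpace ℝ (Fin 2)) : EuclideanSpace ℝ (Fin 2) :=
  ((-(2 * Real.pi)⁻¹) / ‖x‖ ^ 2) • x

open Set

local notation "ℝ²" => EuclideanSpace ℝ (Fin 2)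

lemma integrable_inv_add_sq {t : ℝ} (ht : 0 < t) :
    Integrable fun r : ℝ ↦ (t + r ^ 2)⁻¹ := by
  have hs : √t ≠ 0 := (sqrt_pos.2 ht).ne'
  refine ((integrable_inv_one_add_sq.comp_div hs).const_mul t⁻¹).congr (.of_forall fun r ↦ ?_)
  simp only [div_pow, sq_sqrt ht.le]
  field_simp

lemma integral_inv_add_sq {t : ℝ} (ht : 0 < t) :
    ∫ r : ℝ, (t + r ^ 2)⁻¹ = π * t ^ (-(1 / 2 : ℝ)) := by
  have hs : 0 < √t := sqrt_pos.2 ht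
  have h : ∀ r : ℝ, (t + r ^ 2)⁻¹ = t⁻¹ * (1 + (r / √t) ^ 2)⁻¹ := fun r ↦ by
    rw [div_pow, sq_sqrt ht.le]; field_simp
  simp_rw [h]
  rw [integral_const_mul, Measure.integral_comp_div (fun r ↦ (1 + r ^ 2)⁻¹),
    integral_univ_inv_one_add_sq, abs_of_pos hs, smul_eq_mul, rpow_neg ht.le, ← sqrt_eq_rpow]
  field_simp
  rw [sq_sqrt ht.le]

lemma integrable_inv_add_sq_mul_norm {t : ℝ} (ht : 0 < t) :
    Integrable fun y : ℝ² ↦ ((t + ‖y‖ ^ 2) * ‖y‖)⁻¹ := by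
  rw [integrable_fun_norm_addHaar volume (f := fun r ↦ ((t + r ^ 2) * r)⁻¹),
    finrank_euclideanSpace_fin]
  refine (integrable_inv_add_sq ht).integrableOn.congr_fun (fun r (hr : 0 < r) ↦ ?_)
    measurableSet_Ioi
  simp only [Nat.reduceSub, pow_one, smul_eq_mul]
  field_simp

lemma integral_inv_add_sq_mul_norm_le {t : ℝ} (ht : 0 < t) :
    ∫ y : ℝ², ((t + ‖y‖ ^ 2) * ‖y‖)⁻¹ ≤ 2 * π ^ 2 * t ^ (-(1 / 2 : ℝ)) := by
  have hradial : ∫ r in Ioi (0 : ℝ), r ^ (2 - 1) • ((t + r ^ 2) * r)⁻¹ =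
      ∫ r in Ioi (0 : ℝ), (t + r ^ 2)⁻¹ :=
    setIntegral_congr_fun measurableSet_Ioi fun r (hr : 0 < r) ↦ by
      simp only [Nat.reduceSub, pow_one, smul_eq_mul]; field_simp
  have hhalf : ∫ r in Ioi (0 : ℝ), (t + r ^ 2)⁻¹ ≤ π * t ^ (-(1 / 2 : ℝ)) :=
    integral_inv_add_sq ht ▸
      setIntegral_le_integral (integrable_inv_add_sq ht) (.of_forall fun r ↦ by positivity)
  rw [integral_fun_norm_addHaar volume (fun r ↦ ((t + r ^ 2) * r)⁻¹),
    finrank_euclideanSpace_fin, hradial, measureReal_def, EuclideanSpace.volume_ball_fin_two]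
  simp only [ENNReal.ofReal_one, one_pow, one_mul, ENNReal.toReal_ofReal pi_pos.le, nsmul_eq_mul,
    smul_eq_mul, Nat.cast_ofNat]
  nlinarith [pi_pos]

lemma norm_rieszKernel {z : ℝ²} (hz : z ≠ 0) : ‖rieszKernel z‖ = (2 * π)⁻¹ * ‖z‖⁻¹ := by
  have h : ‖z‖ ≠ 0 := norm_ne_zero_iff.2 hz
  rw [rieszKernel, norm_smul, norm_div, norm_neg, norm_pow, norm_norm, norm_inv,
    Real.norm_of_nonneg (by positivity : 0 ≤ 2 * π)]
  field_simp

lemma inv_add_sq_mul_le {t a b : ℝ} (ht : 0 ≤ t) (ha : 0 < a) (hb : 0 < b) :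
    ((t + a ^ 2) * b)⁻¹ ≤ ((t + a ^ 2) * a)⁻¹ + ((t + b ^ 2) * b)⁻¹ := by
  rcases le_total a b with hab | hba
  · exact le_add_of_le_of_nonneg (inv_anti₀ (by positivity) (by gcongr)) (by positivity)
  · exact le_add_of_nonneg_of_le (by positivity) (inv_anti₀ (by positivity) (by gcongr))

lemma norm_smul_rieszKernel_sub_le {t M v : ℝ} {x y : ℝ²} (ht : 0 ≤ t) (hy : y ≠ 0)
    (hyx : y ≠ x) (hv : (t + ‖y‖ ^ 2) * |v| ≤ M) :
    ‖v • rieszKernel (x - y)‖ ≤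
      (2 * π)⁻¹ * M * (((t + ‖y‖ ^ 2) * ‖y‖)⁻¹ + ((t + ‖x - y‖ ^ 2) * ‖x - y‖)⁻¹) := by
  have hxy : x - y ≠ 0 := sub_ne_zero.2 hyx.symm
  have hv_le : |v| ≤ M * (t + ‖y‖ ^ 2)⁻¹ := by
    rw [← div_eq_mul_inv, le_div_iff₀ (by positivity), mul_comm]; exact hv
  rw [norm_smul, Real.norm_eq_abs, norm_rieszKernel hxy]
  calc |v| * ((2 * π)⁻¹ * ‖x - y‖⁻¹)
      ≤ M * (t + ‖y‖ ^ 2)⁻¹ * ((2 * π)⁻¹ * ‖x - y‖⁻¹) := by gcongr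
    _ = (2 * π)⁻¹ * M * ((t + ‖y‖ ^ 2) * ‖x - y‖)⁻¹ := by
      rw [mul_inv (t + ‖y‖ ^ 2)]; ring
    _ ≤ _ := by
      have hM : 0 ≤ M := (mul_nonneg (by positivity) (abs_nonneg v)).trans hv
      gcongr
      exact inv_add_sq_mul_le ht (norm_pos_iff.2 hy) (norm_pos_iff.2 hxy)

/-- If `u ∈ 𝒳` and `φ(·,t) = (-Δ)⁻¹ u(·,t)`, then
`‖∇φ(·,t)‖_{L^∞} ≤ C ‖u‖_𝒳 t^{-1/2}`. -/
theorem grad_phi_Linfty_bound :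
    ∃ C : ℝ, 0 < C ∧
      ∀ (u : EuclideanSpace ℝ (Fin 2) → ℝ → ℝ) (M : ℝ),
        (∀ t : ℝ, 0 < t → ∀ᵐ x : EuclideanSpace ℝ (Fin 2),
          (t + ‖x‖ ^ 2) * |u x t| ≤ M) →
        ∀ t : ℝ, 0 < t → ∀ x : EuclideanSpace ℝ (Fin 2),
          ‖∫ y : EuclideanSpace ℝ (Fin 2), u y t • rieszKernel (x - y)‖
            ≤ C * M * t ^ (-(1 / 2 : ℝ)) := by
  refine ⟨2 * π, by positivity, fun u M hu t ht x ↦ ?_⟩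
  set g : ℝ² → ℝ := fun y ↦ ((t + ‖y‖ ^ 2) * ‖y‖)⁻¹
  have hg : Integrable g := integrable_inv_add_sq_mul_norm ht
  have hM : 0 ≤ M := by
    obtain ⟨y, hy⟩ := (hu t ht).exists
    exact (mul_nonneg (by positivity) (abs_nonneg _)).trans hy
  have hbound : ∀ᵐ y : ℝ²,
      ‖u y t • rieszKernel (x - y)‖ ≤ (2 * π)⁻¹ * M * (g y + g (x - y)) := by
    filter_upwards [hu t ht, volume.ae_ne 0, volume.ae_ne x] with y hy hy0 hyx
    exact norm_smul_rieszKernel_sub_le ht.le hy0 hyx hy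
  calc ‖∫ y : ℝ², u y t • rieszKernel (x - y)‖
      ≤ ∫ y : ℝ², (2 * π)⁻¹ * M * (g y + g (x - y)) :=
        norm_integral_le_of_norm_le ((hg.add (hg.comp_sub_left x)).const_mul _) hbound
    _ = (2 * π)⁻¹ * M * (2 * ∫ y, g y) := by
        rw [integral_const_mul, integral_add hg (hg.comp_sub_left x),
          integral_sub_left_eq_self g volume x, ← two_mul]
    _ ≤ (2 * π)⁻¹ * M * (2 * (2 * π ^ 2 * t ^ (-(1 / 2 : ℝ)))) := by
        gcongr
        exact integral_inv_add_sq_mul_norm_le ht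
    _ = 2 * π * M * t ^ (-(1 / 2 : ℝ)) := by field_simp
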